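/- arXiv:2411.12080 — 2 statements merged into one kernel-verified Lean document; each statement's English description precedes it below -/
import Mathlib

section
/- Let σ̲, σ̄ ∈ R^{d×d} and let Γ̲, Γ̄ ∈ S^d (symmetric d×d matrices) satisfy the block matrix inequality diag(Γ̲, −Γ̄) ≤ (3/ε)·G, where G is the 2d×2d block matrix with I blocks on the diagonal and −I blocks off-diagonal. Then tr(σ̲σ̲ᵀΓ̲ − σ̄σ̄ᵀΓ̄) ≤ (3/ε)·‖σ̲ − σ̄‖_F², where ‖·‖_F is the Frobenius norm. -/
/-!
With `τ` the `2d × d` matrix stacking `σ₁` over `σ₂`, conjugating the matrix inequality by `τ`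
and taking traces gives `tr (τᵀ diag(Γ₁, -Γ₂) τ) ≤ (3/ε) tr (τᵀ G τ)`. The left side is
`tr (σ₁ᵀ Γ₁ σ₁) - tr (σ₂ᵀ Γ₂ σ₂)`, which equals the left side of the claim by cyclicity of the
trace, and `τᵀ G τ = (σ₁ - σ₂)ᵀ (σ₁ - σ₂)`, whose trace is the squared Frobenius norm.
-/

open Matrix

namespace Matrix

variable {m n m₁ m₂ R : Type*}

theorem trace_conjTranspose_mul_mul_le_of_posSemidef_sub [Fintype n] [Fintype m] [Ring R]
    [PartialOrder R] [StarRing R] [AddLeftMono R] {A B : Matrix n n R} (h : (B - A).PosSemidef)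
    (τ : Matrix n m R) : (τᴴ * A * τ).trace ≤ (τᴴ * B * τ).trace := by
  have := (h.conjTranspose_mul_mul_same τ).trace_nonneg
  rwa [Matrix.mul_sub, Matrix.sub_mul, trace_sub, sub_nonneg] at this

theorem trace_mul_transpose_mul_eq_trace_transpose_mul_mul [Fintype m] [Fintype n]
    [CommSemiring R] (σ : Matrix m n R) (Γ : Matrix m m R) :
    (σ * σᵀ * Γ).trace = (σᵀ * Γ * σ).trace := by
  rw [Matrix.mul_assoc, trace_mul_comm]

theorem trace_transpose_mul_self [Fintype m] [Fintype n] [CommSemiring R] (A : Matrix m n R) :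
    (Aᵀ * A).trace = ∑ i, ∑ j, A i j ^ 2 := by
  simp only [trace, diag_apply, mul_apply, transpose_apply, sq]
  exact Finset.sum_comm

theorem transpose_fromRows_mul_fromBlocks_mul_fromRows [Fintype m₁] [Fintype m₂] [CommSemiring R]
    (A₁ : Matrix m₁ n R) (A₂ : Matrix m₂ n R) (B₁₁ : Matrix m₁ m₁ R) (B₁₂ : Matrix m₁ m₂ R)
    (B₂₁ : Matrix m₂ m₁ R) (B₂₂ : Matrix m₂ m₂ R) :
    (fromRows A₁ A₂)ᵀ * fromBlocks B₁₁ B₁₂ B₂₁ B₂₂ * fromRows A₁ A₂ =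
      A₁ᵀ * B₁₁ * A₁ + A₁ᵀ * B₁₂ * A₂ + A₂ᵀ * B₂₁ * A₁ + A₂ᵀ * B₂₂ * A₂ := by
  simp only [transpose_fromRows, fromCols_mul_fromBlocks, fromCols_mul_fromRows, Matrix.add_mul,
    Matrix.mul_assoc]
  abel

theorem transpose_fromRows_mul_fromBlocks_zero_mul_fromRows [Fintype m₁] [Fintype m₂]
    [CommSemiring R] (A₁ : Matrix m₁ n R) (A₂ : Matrix m₂ n R) (B₁ : Matrix m₁ m₁ R)
    (B₂ : Matrix m₂ m₂ R) :
    (fromRows A₁ A₂)ᵀ * fromBlocks B₁ 0 0 B₂ * fromRows A₁ A₂ = A₁ᵀ * B₁ * A₁ + A₂ᵀ * B₂ * A₂ := by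
  simp [transpose_fromRows_mul_fromBlocks_mul_fromRows]

theorem transpose_fromRows_mul_fromBlocks_one_neg_one_mul_fromRows [Fintype m] [DecidableEq m]
    [CommRing R] (A₁ A₂ : Matrix m n R) :
    (fromRows A₁ A₂)ᵀ * (fromBlocks 1 (-1) (-1) 1 : Matrix (m ⊕ m) (m ⊕ m) R) * fromRows A₁ A₂ =
      (A₁ - A₂)ᵀ * (A₁ - A₂) := by
  simp only [transpose_fromRows_mul_fromBlocks_mul_fromRows, transpose_sub, Matrix.mul_one,
    Matrix.mul_neg, Matrix.neg_mul, Matrix.sub_mul, Matrix.mul_sub]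
  abel

end Matrix

theorem trace_estimate_CIL_general
    (d : ℕ) (ε : ℝ)
    (σ₁ σ₂ Γ₁ Γ₂ : Matrix (Fin d) (Fin d) ℝ)
    (h : ((3 / ε) • Matrix.fromBlocks (1 : Matrix (Fin d) (Fin d) ℝ) (-1) (-1) 1
          - Matrix.fromBlocks Γ₁ 0 0 (-Γ₂)).PosSemidef) :
    (σ₁ * σ₁.transpose * Γ₁).trace - (σ₂ * σ₂.transpose * Γ₂).trace
      ≤ (3 / ε) * ∑ i, ∑ j, (σ₁ i j - σ₂ i j) ^ 2 := by
  have key := trace_conjTranspose_mul_mul_le_of_posSemidef_sub h (fromRows σ₁ σ₂)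
  rw [conjTranspose_eq_transpose_of_trivial, Matrix.mul_smul, Matrix.smul_mul, trace_smul,
    transpose_fromRows_mul_fromBlocks_one_neg_one_mul_fromRows, trace_transpose_mul_self,
    transpose_fromRows_mul_fromBlocks_zero_mul_fromRows, Matrix.mul_neg, Matrix.neg_mul,
    ← sub_eq_add_neg, trace_sub, smul_eq_mul] at key
  rwa [trace_mul_transpose_mul_eq_trace_transpose_mul_mul,
    trace_mul_transpose_mul_eq_trace_transpose_mul_mul]

/-- the trace estimate from the Crandall–Ishii–Lions matrix inequality. -/
theorem trace_estimate_CIL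
    (d : ℕ) (ε : ℝ) (hε : 0 < ε)
    (σ₁ σ₂ Γ₁ Γ₂ : Matrix (Fin d) (Fin d) ℝ)
    (hΓ₁ : Γ₁.IsSymm) (hΓ₂ : Γ₂.IsSymm)
    (h : ((3 / ε) • Matrix.fromBlocks (1 : Matrix (Fin d) (Fin d) ℝ) (-1) (-1) 1
          - Matrix.fromBlocks Γ₁ 0 0 (-Γ₂)).PosSemidef) :
    (σ₁ * σ₁.transpose * Γ₁).trace - (σ₂ * σ₂.transpose * Γ₂).trace
      ≤ (3 / ε) * ∑ i, ∑ j, (σ₁ i j - σ₂ i j) ^ 2 :=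
  trace_estimate_CIL_general d ε σ₁ σ₂ Γ₁ Γ₂ h
end

section
/- Let (Λ_t)_{t≥0} and (Λ'_t)_{t≥0} be continuous nondecreasing real-valued functions with Λ_0 = |𝔬|, Λ'_0 = |𝔬'|, and suppose both satisfy Λ_{t+s} − Λ_t ≥ s/c for all t, s ≥ 0 (with c ≥ 1). Define exit times τ = inf{t ≥ 0 : Λ_t ≥ T} and τ' = inf{t ≥ 0 : Λ'_t ≥ T}, and assume τ, τ' ≤ T* := cT. Then |τ − τ'| ≤ c · sup_{t ≤ T*} |Λ_t − Λ'_t|. -/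
/-!
By continuity the clock `Λ` sits exactly at level `T` at its hitting time `τ`, so `Λ'` is within
`ε = sup |Λ - Λ'|` of `T` there; the growth rate `1/c` then carries `Λ'` up to `T` within an
extra time `c ε`, whence `τ' ≤ τ + c ε`. Exchanging the clocks gives the other inequality.
-/

open Set

theorem IsCompact.le_ciSup {X : Type*} [TopologicalSpace X] {K : Set X} {h : X → ℝ}
    (hK : IsCompact K) (hh : ContinuousOn h K) {t : X} (ht : t ∈ K) :
    h t ≤ ⨆ s : K, h s :=
  _root_.le_ciSup (f := fun s : K => h s)
    (by simpa only [image_eq_range] using hK.bddAbove_image hh) ⟨t, ht⟩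

def GrowsAtLeast (c : ℝ) (f : ℝ → ℝ) : Prop :=
  ∀ t s : ℝ, 0 ≤ t → 0 ≤ s → s / c ≤ f (t + s) - f t

/-- The first time `t ≥ 0` at which `f t ≥ T`; it is `0` when that never happens. -/
noncomputable def hittingTime (f : ℝ → ℝ) (T : ℝ) : ℝ :=
  sInf {t : ℝ | 0 ≤ t ∧ T ≤ f t}

section Hitting

variable {f g : ℝ → ℝ} {c T : ℝ}

theorem GrowsAtLeast.add_div_le (hf : GrowsAtLeast c f) {t s : ℝ} (ht : 0 ≤ t) (hs : 0 ≤ s) :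
    f t + s / c ≤ f (t + s) := by
  linarith [hf t s ht hs]

theorem GrowsAtLeast.exists_le (hf : GrowsAtLeast c f) (hc : 0 < c) (T : ℝ) :
    ∃ t, 0 ≤ t ∧ T ≤ f t := by
  refine ⟨max 0 (c * (T - f 0)), le_max_left _ _, ?_⟩
  have hgrowth := hf.add_div_le le_rfl (le_max_left 0 (c * (T - f 0)))
  rw [zero_add] at hgrowth
  have hlevel : T - f 0 ≤ max 0 (c * (T - f 0)) / c := by
    rw [le_div_iff₀ hc, mul_comm]
    exact le_max_right _ _
  linarith

theorem hittingTime_le {t : ℝ} (ht : 0 ≤ t) (hft : T ≤ f t) : hittingTime f T ≤ t :=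
  csInf_le ⟨0, fun _ hs => hs.1⟩ ⟨ht, hft⟩

theorem GrowsAtLeast.hittingTime_mem (hf : GrowsAtLeast c f) (hcont : Continuous f)
    (hc : 0 < c) : 0 ≤ hittingTime f T ∧ T ≤ f (hittingTime f T) := by
  have hclosed : IsClosed {t : ℝ | 0 ≤ t ∧ T ≤ f t} :=
    isClosed_le continuous_const continuous_id |>.inter (isClosed_le continuous_const hcont)
  exact hclosed.csInf_mem (hf.exists_le hc T) ⟨0, fun _ hs => hs.1⟩

theorem GrowsAtLeast.hittingTime_le_add (hg : GrowsAtLeast c g) (hc : 0 < c) {t ε : ℝ}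
    (ht : 0 ≤ t) (hε : 0 ≤ ε) (hgt : T - ε ≤ g t) : hittingTime g T ≤ t + c * ε := by
  refine hittingTime_le (by positivity) ?_
  have hgrowth := hg.add_div_le ht (mul_nonneg hc.le hε)
  rw [mul_div_cancel_left₀ ε hc.ne'] at hgrowth
  linarith

theorem hittingTime_le_hittingTime_add (hf : GrowsAtLeast c f) (hg : GrowsAtLeast c g)
    (hcont : Continuous f) (hc : 0 < c) {b ε : ℝ} (hb : hittingTime f T ≤ b)
    (hfg : ∀ t ∈ Icc 0 b, |f t - g t| ≤ ε) :
    hittingTime g T ≤ hittingTime f T + c * ε := by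
  obtain ⟨hτ₀, hfτ⟩ := hf.hittingTime_mem (T := T) hcont hc
  have hclose := hfg _ ⟨hτ₀, hb⟩
  exact hg.hittingTime_le_add hc hτ₀ ((abs_nonneg _).trans hclose)
    (by linarith [(abs_le.mp hclose).2])

end Hitting

theorem exit_time_estimate_general
    (Λ Λ' : ℝ → ℝ) (c T : ℝ)
    (hc : 1 ≤ c)
    (hΛcont : Continuous Λ) (hΛ'cont : Continuous Λ')
    (hgrow : ∀ t s : ℝ, 0 ≤ t → 0 ≤ s → s / c ≤ Λ (t + s) - Λ t)
    (hgrow' : ∀ t s : ℝ, 0 ≤ t → 0 ≤ s → s / c ≤ Λ' (t + s) - Λ' t)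
    (τ τ' : ℝ)
    (hτ : τ = sInf {t : ℝ | 0 ≤ t ∧ T ≤ Λ t})
    (hτ' : τ' = sInf {t : ℝ | 0 ≤ t ∧ T ≤ Λ' t})
    (hτb : τ ≤ c * T) (hτ'b : τ' ≤ c * T) :
    |τ - τ'| ≤ c * ⨆ t : Set.Icc (0 : ℝ) (c * T), |Λ t - Λ' t| := by
  have hc₀ : 0 < c := by linarith
  have hsup :
      ∀ t ∈ Icc 0 (c * T), |Λ t - Λ' t| ≤ ⨆ s : Icc (0 : ℝ) (c * T), |Λ s - Λ' s| :=
    fun t ht => isCompact_Icc.le_ciSup (hΛcont.sub hΛ'cont).abs.continuousOn ht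
  subst hτ hτ'
  have hτ'_le := hittingTime_le_hittingTime_add hgrow hgrow' hΛcont hc₀ hτb hsup
  have hτ_le := hittingTime_le_hittingTime_add hgrow' hgrow hΛ'cont hc₀ hτ'b
    fun t ht => (abs_sub_comm _ _).trans_le (hsup t ht)
  exact abs_sub_le_iff.2 ⟨sub_le_iff_le_add'.2 hτ_le, sub_le_iff_le_add'.2 hτ'_le⟩

/-- closeness of the clocks implies closeness of their exit times. -/
theorem exit_time_estimate
    (Λ Λ' : ℝ → ℝ) (a a' c T : ℝ)
    (hc : 1 ≤ c) (hT : 0 < T)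
    (hΛcont : Continuous Λ) (hΛ'cont : Continuous Λ')
    (hΛmono : Monotone Λ) (hΛ'mono : Monotone Λ')
    (hΛ0 : Λ 0 = a) (hΛ'0 : Λ' 0 = a')
    (hgrow : ∀ t s : ℝ, 0 ≤ t → 0 ≤ s → s / c ≤ Λ (t + s) - Λ t)
    (hgrow' : ∀ t s : ℝ, 0 ≤ t → 0 ≤ s → s / c ≤ Λ' (t + s) - Λ' t)
    (τ τ' : ℝ)
    (hτ : τ = sInf {t : ℝ | 0 ≤ t ∧ T ≤ Λ t})
    (hτ' : τ' = sInf {t : ℝ | 0 ≤ t ∧ T ≤ Λ' t})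
    (hτb : τ ≤ c * T) (hτ'b : τ' ≤ c * T) :
    |τ - τ'| ≤ c * ⨆ t : Set.Icc (0 : ℝ) (c * T), |Λ t - Λ' t| :=
  exit_time_estimate_general Λ Λ' c T hc hΛcont hΛ'cont hgrow hgrow' τ τ' hτ hτ' hτb hτ'b
end
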